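/- Let q, p ∈ ℂ with |q| = 1, q ≠ 0, q² ≠ -1, p² = q, |p| = 1. Define S := q⁻¹ R̂_{q⁻¹} (nonzero entries S^{11}_{11} = 1, S^{12}_{12} = q⁻²-1, S^{12}_{21} = q⁻¹, S^{21}_{12} = q⁻¹, S^{22}_{22} = 1) and g with nonzero entries g^{12} = -p, g^{21} = p⁻¹. Then the reality conditions hold: (a) Σ_{k,l} conj(S^{ji}_{kl}) S^{lk}_{mn} = δ^i_m δ^j_n for all i,j,m,n; (b) Σ_{k,l} S^{ij}_{kl} g^{kl} = conj(g^{ji}) for all i,j. -/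

import Mathlib

open Finset

/-- The flip `S := q⁻¹ R̂_{q⁻¹}`: nonzero entries `S^{11}_{11} = 1`,
`S^{12}_{12} = q⁻²-1`, `S^{12}_{21} = q⁻¹`, `S^{21}_{12} = q⁻¹`,
`S^{22}_{22} = 1`. -/
noncomputable def RmatS (q : ℂ) : Fin 2 → Fin 2 → Fin 2 → Fin 2 → ℂ :=
  fun i j k l =>
    if i = 0 ∧ j = 0 ∧ k = 0 ∧ l = 0 then 1
    else if i = 0 ∧ j = 1 ∧ k = 0 ∧ l = 1 then q⁻¹ ^ 2 - 1
    else if i = 0 ∧ j = 1 ∧ k = 1 ∧ l = 0 then q⁻¹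
    else if i = 1 ∧ j = 0 ∧ k = 0 ∧ l = 1 then q⁻¹
    else if i = 1 ∧ j = 1 ∧ k = 1 ∧ l = 1 then 1
    else 0

/-- The q-deformed epsilon-tensor metric `g = ε_{q⁻¹}`: nonzero entries
`g^{12} = -p`, `g^{21} = p⁻¹`, where `p² = q`. -/
noncomputable def Rmatg (p : ℂ) : Fin 2 → Fin 2 → ℂ :=
  fun i j =>
    if i = 0 ∧ j = 1 then -p
    else if i = 1 ∧ j = 0 then p⁻¹
    else 0

/-!
Conjugation acts on the entries of `S` and `g` by `q ↦ conj q` and `p ↦ conj p`, and on the unit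
circle `conj z = z⁻¹`. Condition (a) thus becomes the rational identity
`S(q⁻¹)^{ji}_{kl} S(q)^{lk}_{mn} = δ^i_m δ^j_n`, i.e. `R̂_{q⁻¹}` is the index-reversed inverse of
`R̂_q`; condition (b) becomes `S(q)^{ij}_{kl} g(p)^{kl} = g(-p)^{ij}`, which uses `p² = q`.
-/

lemma conj_RmatS (q : ℂ) (i j k l : Fin 2) :
    starRingEnd ℂ (RmatS q i j k l) = RmatS (starRingEnd ℂ q) i j k l := by
  unfold RmatS
  split_ifs <;> simp

lemma conj_Rmatg_swap (p : ℂ) (i j : Fin 2) :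
    starRingEnd ℂ (Rmatg p j i) = Rmatg (-(starRingEnd ℂ p)⁻¹) i j := by
  fin_cases i <;> fin_cases j <;> simp [Rmatg]

lemma sum_RmatS_inv_mul_RmatS {q : ℂ} (hq : q ≠ 0) (i j m n : Fin 2) :
    ∑ k : Fin 2, ∑ l : Fin 2, RmatS q⁻¹ j i k l * RmatS q l k m n
      = (if i = m then 1 else 0) * (if j = n then 1 else 0) := by
  fin_cases i <;> fin_cases j <;> fin_cases m <;> fin_cases n <;>
    simp [RmatS, Fin.sum_univ_two] <;> field_simp
  ring

lemma sum_RmatS_mul_Rmatg {q p : ℂ} (hp : p ^ 2 = q) (hp0 : p ≠ 0) (i j : Fin 2) :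
    ∑ k : Fin 2, ∑ l : Fin 2, RmatS q i j k l * Rmatg p k l = Rmatg (-p) i j := by
  subst hp
  fin_cases i <;> fin_cases j <;> simp [RmatS, Rmatg, Fin.sum_univ_two] <;> field_simp
  ring

theorem Rmat_reality_general (q p : ℂ) (hqabs : ‖q‖ = 1) (hq : q ≠ 0)
    (hp : p ^ 2 = q) (hpabs : ‖p‖ = 1) :
    (∀ i j m n : Fin 2,
        (∑ k : Fin 2, ∑ l : Fin 2,
            (starRingEnd ℂ) (RmatS q j i k l) * RmatS q l k m n)
          = (if i = m then 1 else 0) * (if j = n then 1 else 0))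
    ∧ (∀ i j : Fin 2,
        (∑ k : Fin 2, ∑ l : Fin 2, RmatS q i j k l * Rmatg p k l)
          = (starRingEnd ℂ) (Rmatg p j i)) := by
  have hp0 : p ≠ 0 := by
    rintro rfl
    simp at hpabs
  refine ⟨fun i j m n => ?_, fun i j => ?_⟩
  · simp_rw [conj_RmatS, ← Complex.inv_eq_conj hqabs]
    exact sum_RmatS_inv_mul_RmatS hq i j m n
  · rw [conj_Rmatg_swap, ← Complex.inv_eq_conj hpabs, inv_inv]
    exact sum_RmatS_mul_Rmatg hp hp0 i j

/-- Reality conditions for the `R̂`-matrix flip and metric with `|q| = |p| = 1`: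
(a) `(S^{ji}_{kl})* S^{lk}_{mn} = δ^i_m δ^j_n`, and
(b) `S^{ij}_{kl} g^{kl} = (g^{ji})*`. -/
theorem Rmat_reality (q p : ℂ) (hqabs : ‖q‖ = 1) (hq : q ≠ 0)
    (hq2 : q ^ 2 ≠ -1) (hp : p ^ 2 = q) (hpabs : ‖p‖ = 1) :
    (∀ i j m n : Fin 2,
        (∑ k : Fin 2, ∑ l : Fin 2,
            (starRingEnd ℂ) (RmatS q j i k l) * RmatS q l k m n)
          = (if i = m then 1 else 0) * (if j = n then 1 else 0))
    ∧ (∀ i j : Fin 2,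
        (∑ k : Fin 2, ∑ l : Fin 2, RmatS q i j k l * Rmatg p k l)
          = (starRingEnd ℂ) (Rmatg p j i)) :=
  Rmat_reality_general q p hqabs hq hp hpabs
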